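/- arXiv:1107.0786 — 3 statements merged into one kernel-verified Lean document; each statement's English description precedes it below -/
import Mathlib

section
/- For every finite signed Borel measure μ on ℝ, the function S_μ is bounded and Lipschitz, its distributional derivative is G_μ, and S_μ solves the elliptic equation −S'' + S = μ in the sense of distributions. Precisely: for every φ ∈ C_c^∞(ℝ) one has ∫_ℝ S_μ(x) φ'(x) dx = −∫_ℝ G_μ(x) φ(x) dx, and ∫_ℝ S_μ(x) (φ(x) − φ''(x)) dx = ∫_ℝ φ(x) dμ(x). -/
open MeasureTheory Real Filter Set Topology ContDiff
set_option maxHeartbeats 1000000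

/-- The kernel `K(x) = (1/2) e^{-|x|}`. -/
noncomputable def Kker (x : ℝ) : ℝ := (1/2) * Real.exp (-|x|)

/-- The pointwise derivative `K'(x) = -(1/2) sgn(x) e^{-|x|}` (with `sgn 0 = 0`). -/
noncomputable def Kker' (x : ℝ) : ℝ := -(1/2) * Real.sign x * Real.exp (-|x|)

/-- `S_μ(x) = ∫ K(x-y) dμ(y)` for a finite signed Borel measure `μ`. -/
noncomputable def Smu (μ : MeasureTheory.SignedMeasure ℝ) (x : ℝ) : ℝ :=
  (∫ y, Kker (x - y) ∂μ.toJordanDecomposition.posPart) -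
    ∫ y, Kker (x - y) ∂μ.toJordanDecomposition.negPart

/-- `G_μ(x) = ∫ K'(x-y) dμ(y)` for a finite signed Borel measure `μ`. -/
noncomputable def Gmu (μ : MeasureTheory.SignedMeasure ℝ) (x : ℝ) : ℝ :=
  (∫ y, Kker' (x - y) ∂μ.toJordanDecomposition.posPart) -
    ∫ y, Kker' (x - y) ∂μ.toJordanDecomposition.negPart

lemma Kker_continuous : Continuous Kker := by
  unfold Kker; fun_prop

lemma measurable_sign' : Measurable Real.sign := by
  unfold Real.sign
  exact Measurable.ite (measurableSet_lt measurable_id measurable_const) measurable_const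
    (Measurable.ite (measurableSet_lt measurable_const measurable_id) measurable_const
      measurable_const)

lemma Kker'_measurable : Measurable Kker' := by
  unfold Kker'
  exact ((measurable_const.mul measurable_sign').mul (by fun_prop))

lemma Kker_abs_le (x : ℝ) : |Kker x| ≤ 1/2 := by
  unfold Kker
  rw [abs_mul, abs_of_pos (by norm_num : (0:ℝ) < 1/2), abs_of_pos (Real.exp_pos _)]
  nlinarith [Real.exp_le_one_iff.mpr (neg_nonpos.mpr (abs_nonneg x)), Real.exp_pos (-|x|)]

lemma Kker'_abs_le (x : ℝ) : |Kker' x| ≤ 1/2 := by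
  unfold Kker'
  have hs : |Real.sign x| ≤ 1 := by
    rcases lt_trichotomy x 0 with h | h | h
    · rw [Real.sign_of_neg h]; norm_num
    · rw [h, Real.sign_zero]; norm_num
    · rw [Real.sign_of_pos h]; norm_num
  have he : Real.exp (-|x|) ≤ 1 := Real.exp_le_one_iff.mpr (neg_nonpos.mpr (abs_nonneg x))
  rw [abs_mul, abs_mul]
  have h0 : |(-(1/2) : ℝ)| = 1/2 := by norm_num
  rw [h0]
  nlinarith [abs_nonneg (Real.sign x), Real.exp_pos (-|x|), abs_of_pos (Real.exp_pos (-|x|))]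

lemma Kker_lip (a b : ℝ) : |Kker a - Kker b| ≤ (1/2) * |a - b| := by
  have key : ∀ s t : ℝ, 0 ≤ s → s ≤ t → |Real.exp (-s) - Real.exp (-t)| ≤ t - s := by
    intro s t hs hst
    have h1 : 1 - (t - s) ≤ Real.exp (-(t - s)) := by
      have := Real.add_one_le_exp (-(t - s)); linarith
    have h2 : Real.exp (-s) ≤ 1 := Real.exp_le_one_iff.mpr (by linarith)
    have h3 : Real.exp (-t) = Real.exp (-s) * Real.exp (-(t - s)) := by
      rw [← Real.exp_add]; ring_nf
    have h4 : 0 ≤ Real.exp (-s) - Real.exp (-t) := by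
      have := Real.exp_le_exp.mpr (neg_le_neg hst); linarith
    rw [abs_of_nonneg h4]
    nlinarith [Real.exp_pos (-s), Real.exp_pos (-(t - s))]
  unfold Kker
  rw [← mul_sub, abs_mul, abs_of_pos (by norm_num : (0:ℝ) < 1/2)]
  have habs : |(|a| - |b|)| ≤ |a - b| := abs_abs_sub_abs_le_abs_sub a b
  have h5 : |b| - |a| ≤ |(|a| - |b|)| := by rw [abs_sub_comm]; exact le_abs_self _
  have h6 : |a| - |b| ≤ |(|a| - |b|)| := le_abs_self _
  have hmain : |Real.exp (-|a|) - Real.exp (-|b|)| ≤ |a - b| := by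
    rcases le_total |a| |b| with h | h
    · have := key |a| |b| (abs_nonneg a) h
      linarith
    · have := key |b| |a| (abs_nonneg b) h
      rw [abs_sub_comm] at this
      linarith
  linarith

lemma tendsto_atTop_zero_of_hcs {f : ℝ → ℝ} (h : HasCompactSupport f) :
    Tendsto f atTop (𝓝 0) := by
  rw [hasCompactSupport_iff_eventuallyEq, Filter.coclosedCompact_eq_cocompact] at h
  exact (h.filter_mono _root_.atTop_le_cocompact).tendsto

lemma tendsto_atBot_zero_of_hcs {f : ℝ → ℝ} (h : HasCompactSupport f) :
    Tendsto f atBot (𝓝 0) := by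
  rw [hasCompactSupport_iff_eventuallyEq, Filter.coclosedCompact_eq_cocompact] at h
  exact (h.filter_mono _root_.atBot_le_cocompact).tendsto

lemma hcs_sub {f g : ℝ → ℝ} (hf : HasCompactSupport f) (hg : HasCompactSupport g) :
    HasCompactSupport (fun x => f x - g x) := hf.comp₂_left hg (sub_zero 0)

lemma hcs_neg {f : ℝ → ℝ} (hf : HasCompactSupport f) :
    HasCompactSupport (fun x => -(f x)) := by
  have h0 : HasCompactSupport (fun _ : ℝ => (0:ℝ)) := by
    simp [HasCompactSupport, tsupport, Function.support]
  simpa [zero_sub] using hcs_sub h0 hf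

lemma hcs_add {f g : ℝ → ℝ} (hf : HasCompactSupport f) (hg : HasCompactSupport g) :
    HasCompactSupport (fun x => f x + g x) := hf.comp₂_left hg (add_zero 0)

variable {φ : ℝ → ℝ}

section pt

variable (hφ : ContDiff ℝ (⊤ : ℕ∞) φ) (hsupp : HasCompactSupport φ)

include hφ hsupp

lemma pt1 (y : ℝ) :
    ∫ x, Kker (x - y) * deriv φ x = -∫ x, Kker' (x - y) * φ x := by
  have hφi : ContDiff ℝ ∞ φ := hφ.of_le (by simp)
  have hφ1 : Differentiable ℝ φ := hφ.differentiable (by simp)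
  have hφd : ContDiff ℝ ∞ (deriv φ) := (contDiff_infty_iff_deriv.mp hφi).2
  have hφd1 : Differentiable ℝ (deriv φ) := hφd.differentiable (by simp)
  -- integrability of the two integrands
  have hint1 : Integrable (fun x => Kker (x - y) * deriv φ x) := by
    apply Continuous.integrable_of_hasCompactSupport
    · exact (Kker_continuous.comp (by fun_prop)).mul hφd.continuous
    · exact HasCompactSupport.mul_left hsupp.deriv
  have hint2 : Integrable (fun x => Kker' (x - y) * φ x) := by
    apply Integrable.mono' ((hφ.continuous.abs.integrable_of_hasCompactSupport
      hsupp.abs).const_mul (1/2))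
    · exact ((Kker'_measurable.comp (measurable_id.sub_const y)).mul
        hφ.continuous.measurable).aestronglyMeasurable
    · filter_upwards with x
      simp only [norm_mul, Real.norm_eq_abs]
      exact mul_le_mul_of_nonneg_right (Kker'_abs_le _) (abs_nonneg _)
  -- derivative data for exp (y - x)
  have hexp1 : ∀ x : ℝ, HasDerivAt (fun x => Real.exp (y - x)) (-Real.exp (y - x)) x := by
    intro x
    have h := (Real.hasDerivAt_exp (y - x)).comp x ((hasDerivAt_id x).const_sub y)
    simpa [Function.comp_def] using h
  have hexp2 : ∀ x : ℝ, HasDerivAt (fun x => Real.exp (x - y)) (Real.exp (x - y)) x := by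
    intro x
    have h := (Real.hasDerivAt_exp (x - y)).comp x ((hasDerivAt_id x).sub_const y)
    simpa [Function.comp_def] using h
  -- the sum integrand
  set F : ℝ → ℝ := fun x => Kker (x - y) * deriv φ x + Kker' (x - y) * φ x with hF
  have hintF : Integrable F := hint1.add hint2
  -- Ioi part
  have hIoi : ∫ x in Ioi y, F x = -((1/2) * φ y) := by
    set u : ℝ → ℝ := fun x => (1/2) * Real.exp (y - x) * φ x with hu
    set w : ℝ → ℝ := fun x => (1/2) * Real.exp (y - x) * deriv φ x
      - (1/2) * Real.exp (y - x) * φ x with hw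
    have hud : ∀ x : ℝ, HasDerivAt u (w x) x := by
      intro x
      have h := (((hexp1 x).const_mul (1/2))).mul (hφ1 x).hasDerivAt
      convert h using 1
      all_goals first | rfl | ((try simp only [hw, Pi.add_apply, Pi.sub_apply]); ring)
    have hwint : Integrable w := by
      apply Continuous.integrable_of_hasCompactSupport
      · fun_prop
      · exact hcs_sub (HasCompactSupport.mul_left hsupp.deriv) (HasCompactSupport.mul_left hsupp)
    have hu0 : Tendsto u atTop (𝓝 0) :=
      tendsto_atTop_zero_of_hcs (HasCompactSupport.mul_left hsupp)
    have h1 : ∫ x in Ioi y, w x = 0 - u y :=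
      integral_Ioi_of_hasDerivAt_of_tendsto' (fun x _ => hud x) hwint.integrableOn hu0
    have h2 : ∫ x in Ioi y, F x = ∫ x in Ioi y, w x := by
      apply setIntegral_congr_fun measurableSet_Ioi
      intro x hx
      have hxy : 0 < x - y := sub_pos.mpr hx
      simp only [hF, hw, Kker, Kker', abs_of_pos hxy, Real.sign_of_pos hxy]
      have : -(x - y) = y - x := by ring
      rw [this]; ring
    rw [h2, h1]
    simp only [hu]
    have : y - y = 0 := by ring
    rw [this, Real.exp_zero]; ring
  -- Iic part
  have hIic : ∫ x in Iic y, F x = (1/2) * φ y := by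
    set v : ℝ → ℝ := fun x => (1/2) * Real.exp (x - y) * φ x with hv
    set w : ℝ → ℝ := fun x => (1/2) * Real.exp (x - y) * deriv φ x
      + (1/2) * Real.exp (x - y) * φ x with hw
    have hvd : ∀ x : ℝ, HasDerivAt v (w x) x := by
      intro x
      have h := (((hexp2 x).const_mul (1/2))).mul (hφ1 x).hasDerivAt
      convert h using 1
      all_goals first | rfl | ((try simp only [hw, Pi.add_apply, Pi.sub_apply]); ring)
    have hwint : Integrable w := by
      apply Continuous.integrable_of_hasCompactSupport
      · fun_prop
      · exact hcs_add (HasCompactSupport.mul_left hsupp.deriv) (HasCompactSupport.mul_left hsupp)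
    have hv0 : Tendsto v atBot (𝓝 0) :=
      tendsto_atBot_zero_of_hcs (HasCompactSupport.mul_left hsupp)
    have h1 : ∫ x in Iic y, w x = v y - 0 :=
      integral_Iic_of_hasDerivAt_of_tendsto' (fun x _ => hvd x) hwint.integrableOn hv0
    have h2 : ∫ x in Iic y, F x = ∫ x in Iic y, w x := by
      rw [setIntegral_congr_set Iio_ae_eq_Iic.symm,
        setIntegral_congr_set Iio_ae_eq_Iic.symm (f := w)]
      apply setIntegral_congr_fun measurableSet_Iio
      intro x hx
      have hxy : x - y < 0 := sub_neg.mpr hx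
      simp only [hF, hw, Kker, Kker', abs_of_neg hxy, Real.sign_of_neg hxy]
      have : -(-(x - y)) = x - y := by ring
      rw [this]; ring
    rw [h2, h1]
    simp only [hv]
    have : y - y = 0 := by ring
    rw [this, Real.exp_zero]; ring
  have hsplit : ∫ x, F x = 0 := by
    rw [← intervalIntegral.integral_Iic_add_Ioi hintF.integrableOn hintF.integrableOn, hIic, hIoi]
    ring
  have := integral_add hint1 hint2
  rw [hF] at hsplit
  rw [this] at hsplit
  linarith

lemma pt2 (y : ℝ) :
    ∫ x, Kker (x - y) * (φ x - deriv (deriv φ) x) = φ y := by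
  have hφi : ContDiff ℝ ∞ φ := hφ.of_le (by simp)
  have hφ1 : Differentiable ℝ φ := hφ.differentiable (by simp)
  have hφd : ContDiff ℝ ∞ (deriv φ) := (contDiff_infty_iff_deriv.mp hφi).2
  have hφd1 : Differentiable ℝ (deriv φ) := hφd.differentiable (by simp)
  have hφdd : ContDiff ℝ ∞ (deriv (deriv φ)) := (contDiff_infty_iff_deriv.mp hφd).2
  have hexp1 : ∀ x : ℝ, HasDerivAt (fun x => Real.exp (y - x)) (-Real.exp (y - x)) x := by
    intro x
    have h := (Real.hasDerivAt_exp (y - x)).comp x ((hasDerivAt_id x).const_sub y)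
    simpa [Function.comp_def] using h
  have hexp2 : ∀ x : ℝ, HasDerivAt (fun x => Real.exp (x - y)) (Real.exp (x - y)) x := by
    intro x
    have h := (Real.hasDerivAt_exp (x - y)).comp x ((hasDerivAt_id x).sub_const y)
    simpa [Function.comp_def] using h
  set F : ℝ → ℝ := fun x => Kker (x - y) * (φ x - deriv (deriv φ) x) with hF
  have hintF : Integrable F := by
    apply Continuous.integrable_of_hasCompactSupport
    · exact (Kker_continuous.comp (by fun_prop)).mul (hφ.continuous.sub hφdd.continuous)
    · exact HasCompactSupport.mul_left (hcs_sub hsupp hsupp.deriv.deriv)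
  have hIoi : ∫ x in Ioi y, F x = (1/2) * (φ y + deriv φ y) := by
    set p : ℝ → ℝ := fun x => (1/2) * Real.exp (y - x) * (φ x + deriv φ x) with hp
    set w : ℝ → ℝ := fun x => -((1/2) * Real.exp (y - x) * (φ x - deriv (deriv φ) x)) with hw
    have hpd : ∀ x : ℝ, HasDerivAt p (w x) x := by
      intro x
      have h := (((hexp1 x).const_mul (1/2))).mul ((hφ1 x).hasDerivAt.add (hφd1 x).hasDerivAt)
      convert h using 1
      all_goals first | rfl | ((try simp only [hw, Pi.add_apply, Pi.sub_apply]); ring)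
    have hwint : Integrable w := by
      apply Continuous.integrable_of_hasCompactSupport
      · exact ((continuous_const.mul (by fun_prop : Continuous fun x : ℝ => Real.exp (y - x))).mul
          (hφ.continuous.sub hφdd.continuous)).neg
      · exact hcs_neg (HasCompactSupport.mul_left (hcs_sub hsupp hsupp.deriv.deriv))
    have hp0 : Tendsto p atTop (𝓝 0) :=
      tendsto_atTop_zero_of_hcs (HasCompactSupport.mul_left (hcs_add hsupp hsupp.deriv))
    have h1 : ∫ x in Ioi y, w x = 0 - p y :=
      integral_Ioi_of_hasDerivAt_of_tendsto' (fun x _ => hpd x) hwint.integrableOn hp0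
    have h2 : ∫ x in Ioi y, F x = -∫ x in Ioi y, w x := by
      rw [← integral_neg]
      apply setIntegral_congr_fun measurableSet_Ioi
      intro x hx
      have hxy : 0 < x - y := sub_pos.mpr hx
      simp only [hF, hw, Kker, abs_of_pos hxy]
      have : -(x - y) = y - x := by ring
      rw [this]; ring
    rw [h2, h1]
    simp only [hp]
    have : y - y = 0 := by ring
    rw [this, Real.exp_zero]; ring
  have hIic : ∫ x in Iic y, F x = (1/2) * (φ y - deriv φ y) := by
    set q : ℝ → ℝ := fun x => (1/2) * Real.exp (x - y) * (φ x - deriv φ x) with hq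
    set w : ℝ → ℝ := fun x => (1/2) * Real.exp (x - y) * (φ x - deriv (deriv φ) x) with hw
    have hqd : ∀ x : ℝ, HasDerivAt q (w x) x := by
      intro x
      have h := (((hexp2 x).const_mul (1/2))).mul ((hφ1 x).hasDerivAt.sub (hφd1 x).hasDerivAt)
      convert h using 1
      all_goals first | rfl | ((try simp only [hw, Pi.add_apply, Pi.sub_apply]); ring)
    have hwint : Integrable w := by
      apply Continuous.integrable_of_hasCompactSupport
      · exact (continuous_const.mul (by fun_prop : Continuous fun x : ℝ => Real.exp (x - y))).mul
          (hφ.continuous.sub hφdd.continuous)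
      · exact HasCompactSupport.mul_left (hcs_sub hsupp hsupp.deriv.deriv)
    have hq0 : Tendsto q atBot (𝓝 0) :=
      tendsto_atBot_zero_of_hcs (HasCompactSupport.mul_left (hcs_sub hsupp hsupp.deriv))
    have h1 : ∫ x in Iic y, w x = q y - 0 :=
      integral_Iic_of_hasDerivAt_of_tendsto' (fun x _ => hqd x) hwint.integrableOn hq0
    have h2 : ∫ x in Iic y, F x = ∫ x in Iic y, w x := by
      rw [setIntegral_congr_set Iio_ae_eq_Iic.symm,
        setIntegral_congr_set Iio_ae_eq_Iic.symm (f := w)]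
      apply setIntegral_congr_fun measurableSet_Iio
      intro x hx
      have hxy : x - y < 0 := sub_neg.mpr hx
      simp only [hF, hw, Kker, abs_of_neg hxy]
      have : -(-(x - y)) = x - y := by ring
      rw [this]
    rw [h2, h1]
    simp only [hq]
    have : y - y = 0 := by ring
    rw [this, Real.exp_zero]; ring
  rw [← intervalIntegral.integral_Iic_add_Ioi hintF.integrableOn hintF.integrableOn, hIic, hIoi]
  ring

end pt

section conv

variable (ν : Measure ℝ) [IsFiniteMeasure ν]

lemma intK (x : ℝ) : Integrable (fun y => Kker (x - y)) ν := by
  apply Integrable.mono' (integrable_const (1/2 : ℝ))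
  · exact (Kker_continuous.comp (by fun_prop)).aestronglyMeasurable
  · filter_upwards with y
    simpa [Real.norm_eq_abs] using Kker_abs_le (x - y)

lemma conv_bound (x : ℝ) : |∫ y, Kker (x - y) ∂ν| ≤ 1/2 * (ν univ).toReal := by
  have h := norm_integral_le_of_norm_le_const (μ := ν) (f := fun y => Kker (x - y))
    (C := 1/2) (by filter_upwards with y; simpa [Real.norm_eq_abs] using Kker_abs_le (x - y))
  simpa [Real.norm_eq_abs, measureReal_def] using h

lemma conv_bound' (x : ℝ) : |∫ y, Kker' (x - y) ∂ν| ≤ 1/2 * (ν univ).toReal := by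
  have h := norm_integral_le_of_norm_le_const (μ := ν) (f := fun y => Kker' (x - y))
    (C := 1/2) (by filter_upwards with y; simpa [Real.norm_eq_abs] using Kker'_abs_le (x - y))
  simpa [Real.norm_eq_abs, measureReal_def] using h

lemma conv_lip (x x' : ℝ) :
    |(∫ y, Kker (x - y) ∂ν) - ∫ y, Kker (x' - y) ∂ν| ≤
      1/2 * (ν univ).toReal * |x - x'| := by
  rw [← integral_sub (intK ν x) (intK ν x')]
  have h := norm_integral_le_of_norm_le_const (μ := ν)
    (f := fun y => Kker (x - y) - Kker (x' - y)) (C := 1/2 * |x - x'|) ?_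
  · calc |∫ y, (Kker (x - y) - Kker (x' - y)) ∂ν| ≤ 1/2 * |x - x'| * (ν univ).toReal := by
          simpa [Real.norm_eq_abs, measureReal_def] using h
      _ = 1/2 * (ν univ).toReal * |x - x'| := by ring
  · filter_upwards with y
    have h2 := Kker_lip (x - y) (x' - y)
    rw [sub_sub_sub_cancel_right] at h2
    simpa [Real.norm_eq_abs] using h2

lemma conv_cont : Continuous (fun x => ∫ y, Kker (x - y) ∂ν) := by
  have hL : LipschitzWith (1/2 * (ν univ).toReal).toNNReal
      (fun x => ∫ y, Kker (x - y) ∂ν) := by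
    apply LipschitzWith.of_dist_le_mul
    intro x x'
    rw [Real.dist_eq, Real.dist_eq,
      Real.coe_toNNReal _ (by positivity : (0:ℝ) ≤ 1/2 * (ν univ).toReal)]
    exact conv_lip ν x x'
  exact hL.continuous

lemma convK'_meas : Measurable (fun x => ∫ y, Kker' (x - y) ∂ν) := by
  have h : StronglyMeasurable (fun z : ℝ × ℝ => Kker' (z.1 - z.2)) :=
    (Kker'_measurable.comp (measurable_fst.sub measurable_snd)).stronglyMeasurable
  exact h.integral_prod_right'.measurable

lemma fub {Kf : ℝ → ℝ} (hK : Measurable Kf) (C : ℝ) (hC : ∀ x, |Kf x| ≤ C) {g : ℝ → ℝ}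
    (hg : Continuous g) (hgs : HasCompactSupport g) :
    ∫ x, (∫ y, Kf (x - y) ∂ν) * g x = ∫ y, (∫ x, Kf (x - y) * g x) ∂ν := by
  have hmeas : AEStronglyMeasurable (fun z : ℝ × ℝ => Kf (z.1 - z.2) * g z.1)
      (volume.prod ν) :=
    ((hK.comp (measurable_fst.sub measurable_snd)).mul
      (hg.measurable.comp measurable_fst)).aestronglyMeasurable
  have hint : Integrable (fun z : ℝ × ℝ => Kf (z.1 - z.2) * g z.1) (volume.prod ν) := by
    have hbint : Integrable (fun z : ℝ × ℝ => (C * |g z.1|) * 1) (volume.prod ν) :=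
      Integrable.mul_prod ((hg.abs.integrable_of_hasCompactSupport hgs.abs).const_mul C)
        (integrable_const 1)
    apply Integrable.mono' hbint hmeas
    filter_upwards with z
    simp only [Real.norm_eq_abs, abs_mul, mul_one]
    exact mul_le_mul_of_nonneg_right (hC _) (abs_nonneg _)
  have h1 : (fun x => (∫ y, Kf (x - y) ∂ν) * g x)
      = fun x => ∫ y, Kf (x - y) * g x ∂ν :=
    funext fun x => (integral_mul_const (g x) _).symm
  rw [h1, integral_integral_swap (f := fun x y => Kf (x - y) * g x) hint]

lemma conv_pt1 {φ : ℝ → ℝ} (hφ : ContDiff ℝ (⊤ : ℕ∞) φ) (hsupp : HasCompactSupport φ) :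
    ∫ x, (∫ y, Kker (x - y) ∂ν) * deriv φ x = -∫ x, (∫ y, Kker' (x - y) ∂ν) * φ x := by
  have hφi : ContDiff ℝ ∞ φ := hφ.of_le (by simp)
  have hφd : ContDiff ℝ ∞ (deriv φ) := (contDiff_infty_iff_deriv.mp hφi).2
  rw [fub ν Kker_continuous.measurable (1/2) Kker_abs_le hφd.continuous hsupp.deriv,
    fub ν Kker'_measurable (1/2) Kker'_abs_le hφ.continuous hsupp, ← integral_neg]
  exact integral_congr_ae (Filter.Eventually.of_forall fun y => by
    simpa using pt1 hφ hsupp y)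

lemma conv_pt2 {φ : ℝ → ℝ} (hφ : ContDiff ℝ (⊤ : ℕ∞) φ) (hsupp : HasCompactSupport φ) :
    ∫ x, (∫ y, Kker (x - y) ∂ν) * (φ x - deriv (deriv φ) x) = ∫ y, φ y ∂ν := by
  have hφi : ContDiff ℝ ∞ φ := hφ.of_le (by simp)
  have hφd : ContDiff ℝ ∞ (deriv φ) := (contDiff_infty_iff_deriv.mp hφi).2
  have hφdd : ContDiff ℝ ∞ (deriv (deriv φ)) := (contDiff_infty_iff_deriv.mp hφd).2
  rw [fub ν Kker_continuous.measurable (1/2) Kker_abs_le (g := fun x => φ x - deriv (deriv φ) x)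
    (hφ.continuous.sub hφdd.continuous)
    (hcs_sub hsupp hsupp.deriv.deriv)]
  exact integral_congr_ae (Filter.Eventually.of_forall fun y => by
    simpa using pt2 hφ hsupp y)

end conv


/-- For every finite signed Borel measure `μ` on `ℝ`, the function `S_μ` is bounded and
Lipschitz, its distributional derivative is `G_μ`, and `S_μ` solves `-S'' + S = μ`
in the sense of distributions. -/
theorem stmt0 (μ : MeasureTheory.SignedMeasure ℝ) :
    (∃ C : ℝ, ∀ x : ℝ, |Smu μ x| ≤ C) ∧
    (∃ L : NNReal, LipschitzWith L (Smu μ)) ∧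
    (∀ φ : ℝ → ℝ, ContDiff ℝ (⊤ : ℕ∞) φ → HasCompactSupport φ →
      (∫ x : ℝ, Smu μ x * deriv φ x = -∫ x : ℝ, Gmu μ x * φ x) ∧
      (∫ x : ℝ, Smu μ x * (φ x - deriv (deriv φ) x) =
        (∫ y, φ y ∂μ.toJordanDecomposition.posPart) -
          ∫ y, φ y ∂μ.toJordanDecomposition.negPart)) := by
  set νp := μ.toJordanDecomposition.posPart with hνp
  set νn := μ.toJordanDecomposition.negPart with hνn
  set M : ℝ := 1/2 * (νp univ).toReal + 1/2 * (νn univ).toReal with hM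
  have hM0 : 0 ≤ M := by positivity
  refine ⟨⟨M, fun x => ?_⟩, ⟨M.toNNReal, ?_⟩, fun φ hφ hsupp => ?_⟩
  · have h1 := conv_bound νp x
    have h2 := conv_bound νn x
    have := abs_sub (∫ y, Kker (x - y) ∂νp) (∫ y, Kker (x - y) ∂νn)
    simp only [Smu, hM]
    calc |(∫ y, Kker (x - y) ∂νp) - ∫ y, Kker (x - y) ∂νn|
        ≤ |∫ y, Kker (x - y) ∂νp| + |∫ y, Kker (x - y) ∂νn| := abs_sub _ _
      _ ≤ M := by rw [hM]; linarith
  · apply LipschitzWith.of_dist_le_mul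
    intro x x'
    rw [Real.dist_eq, Real.dist_eq, Real.coe_toNNReal _ hM0]
    have h1 := conv_lip νp x x'
    have h2 := conv_lip νn x x'
    simp only [Smu]
    calc |((∫ y, Kker (x - y) ∂νp) - ∫ y, Kker (x - y) ∂νn) -
          ((∫ y, Kker (x' - y) ∂νp) - ∫ y, Kker (x' - y) ∂νn)|
        = |((∫ y, Kker (x - y) ∂νp) - ∫ y, Kker (x' - y) ∂νp) -
            ((∫ y, Kker (x - y) ∂νn) - ∫ y, Kker (x' - y) ∂νn)| := by
          congr 1; ring
      _ ≤ |(∫ y, Kker (x - y) ∂νp) - ∫ y, Kker (x' - y) ∂νp| +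
            |(∫ y, Kker (x - y) ∂νn) - ∫ y, Kker (x' - y) ∂νn| := abs_sub _ _
      _ ≤ M * |x - x'| := by rw [hM]; nlinarith [abs_nonneg (x - x')]
  · have hφi : ContDiff ℝ ∞ φ := hφ.of_le (by simp)
    have hφd : ContDiff ℝ ∞ (deriv φ) := (contDiff_infty_iff_deriv.mp hφi).2
    have hφdd : ContDiff ℝ ∞ (deriv (deriv φ)) := (contDiff_infty_iff_deriv.mp hφd).2
    -- integrability of the pieces
    have hintA1 : Integrable (fun x => (∫ y, Kker (x - y) ∂νp) * deriv φ x) :=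
      ((conv_cont νp).mul hφd.continuous).integrable_of_hasCompactSupport
        (HasCompactSupport.mul_left hsupp.deriv)
    have hintB1 : Integrable (fun x => (∫ y, Kker (x - y) ∂νn) * deriv φ x) :=
      ((conv_cont νn).mul hφd.continuous).integrable_of_hasCompactSupport
        (HasCompactSupport.mul_left hsupp.deriv)
    have hintA2 : Integrable (fun x => (∫ y, Kker (x - y) ∂νp) * (φ x - deriv (deriv φ) x)) :=
      ((conv_cont νp).mul (hφ.continuous.sub hφdd.continuous)).integrable_of_hasCompactSupport
        (HasCompactSupport.mul_left (hcs_sub hsupp hsupp.deriv.deriv))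
    have hintB2 : Integrable (fun x => (∫ y, Kker (x - y) ∂νn) * (φ x - deriv (deriv φ) x)) :=
      ((conv_cont νn).mul (hφ.continuous.sub hφdd.continuous)).integrable_of_hasCompactSupport
        (HasCompactSupport.mul_left (hcs_sub hsupp hsupp.deriv.deriv))
    have hintG : ∀ (ν : Measure ℝ) [IsFiniteMeasure ν],
        Integrable (fun x => (∫ y, Kker' (x - y) ∂ν) * φ x) := by
      intro ν _
      apply Integrable.mono' ((hφ.continuous.abs.integrable_of_hasCompactSupport
        hsupp.abs).const_mul (1/2 * (ν univ).toReal))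
      · exact ((convK'_meas ν).mul hφ.continuous.measurable).aestronglyMeasurable
      · filter_upwards with x
        simp only [Real.norm_eq_abs, abs_mul]
        exact mul_le_mul_of_nonneg_right (conv_bound' ν x) (abs_nonneg _)
    constructor
    · have e1 : ∫ x, Smu μ x * deriv φ x
          = (∫ x, (∫ y, Kker (x - y) ∂νp) * deriv φ x)
            - ∫ x, (∫ y, Kker (x - y) ∂νn) * deriv φ x := by
        rw [← integral_sub hintA1 hintB1]
        simp only [Smu, sub_mul] <;> rfl
      have e2 : ∫ x, Gmu μ x * φ x
          = (∫ x, (∫ y, Kker' (x - y) ∂νp) * φ x)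
            - ∫ x, (∫ y, Kker' (x - y) ∂νn) * φ x := by
        rw [← integral_sub (hintG νp) (hintG νn)]
        simp only [Gmu, sub_mul] <;> rfl
      rw [e1, e2, conv_pt1 νp hφ hsupp, conv_pt1 νn hφ hsupp]
      ring
    · have e1 : ∫ x, Smu μ x * (φ x - deriv (deriv φ) x)
          = (∫ x, (∫ y, Kker (x - y) ∂νp) * (φ x - deriv (deriv φ) x))
            - ∫ x, (∫ y, Kker (x - y) ∂νn) * (φ x - deriv (deriv φ) x) := by
        rw [← integral_sub hintA2 hintB2]
        simp only [Smu, sub_mul] <;> rfl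
      rw [e1, conv_pt2 νp hφ hsupp, conv_pt2 νn hφ hsupp]
end

section
/- Vanishing of the kinetic remainder: let (f_+, f_−) be a nonnegative classical solution of the kinetic system on [0,T] (f_± ≥ 0), set ρ = f_+ + f_−, J = c(f_+ − f_−), and M = ∫_ℝ ρ(0,x) dx. Then for every ψ ∈ C^∞_c((0,T)×ℝ): |∫_0^T ∫_ℝ (∂_t J + c² ∂_x ρ)(t,x) ∂_x ψ(t,x) dx dt| ≤ c M T ‖∂_t ∂_x ψ‖_{L^∞} + c² M T ‖∂_{xx} ψ‖_{L^∞}. In particular, for a family of such solutions (f_+^ε, f_−^ε) with a common initial mass M, the distributions (ε/2) ∂_x(∂_t J_ε + c² ∂_x ρ_ε) converge to 0 in the sense of distributions as ε → 0. -/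
open MeasureTheory

/-- A test function `ψ(t,x)` of class `C_c^∞((0,T) × ℝ)`. -/
def IsTestOn (T : ℝ) (ψ : ℝ → ℝ → ℝ) : Prop :=
  ContDiff ℝ (⊤ : ℕ∞) (fun p : ℝ × ℝ => ψ p.1 p.2) ∧
  HasCompactSupport (fun p : ℝ × ℝ => ψ p.1 p.2) ∧
  ∀ t x : ℝ, ψ t x ≠ 0 → t ∈ Set.Ioo 0 T


namespace Stmt11Aux

noncomputable def pd1 (F : ℝ × ℝ → ℝ) (p : ℝ × ℝ) : ℝ := fderiv ℝ F p (1, 0)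
noncomputable def pd2 (F : ℝ × ℝ → ℝ) (p : ℝ × ℝ) : ℝ := fderiv ℝ F p (0, 1)

lemma sliceT {F : ℝ × ℝ → ℝ} (hF : Differentiable ℝ F) (t x : ℝ) :
    HasDerivAt (fun s => F (s, x)) (pd1 F (t, x)) t :=
  (hF (t, x)).hasFDerivAt.comp_hasDerivAt t ((hasDerivAt_id t).prodMk (hasDerivAt_const t x))

lemma sliceX {F : ℝ × ℝ → ℝ} (hF : Differentiable ℝ F) (t x : ℝ) :
    HasDerivAt (fun y => F (t, y)) (pd2 F (t, x)) x :=
  (hF (t, x)).hasFDerivAt.comp_hasDerivAt x ((hasDerivAt_const x t).prodMk (hasDerivAt_id x))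

lemma pd1_cont {F : ℝ × ℝ → ℝ} (hF : ContDiff ℝ 1 F) : Continuous (pd1 F) :=
  (hF.continuous_fderiv one_ne_zero).clm_apply continuous_const

lemma pd2_cont {F : ℝ × ℝ → ℝ} (hF : ContDiff ℝ 1 F) : Continuous (pd2 F) :=
  (hF.continuous_fderiv one_ne_zero).clm_apply continuous_const

lemma pd2_contDiff {F : ℝ × ℝ → ℝ} (hF : ContDiff ℝ (⊤ : ℕ∞) F) : ContDiff ℝ (⊤ : ℕ∞) (pd2 F) :=
  (hF.fderiv_right (by simp)).clm_apply contDiff_const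

lemma pd1_hcs {F : ℝ × ℝ → ℝ} (h : HasCompactSupport F) : HasCompactSupport (pd1 F) :=
  HasCompactSupport.fderiv_apply (𝕜 := ℝ) h (1, 0)

lemma pd2_hcs {F : ℝ × ℝ → ℝ} (h : HasCompactSupport F) : HasCompactSupport (pd2 F) :=
  HasCompactSupport.fderiv_apply (𝕜 := ℝ) h (0, 1)

lemma hcsX {f : ℝ × ℝ → ℝ} (h : HasCompactSupport f) (t : ℝ) :
    HasCompactSupport fun x => f (t, x) := by
  have hK : IsCompact (tsupport f) := h
  apply HasCompactSupport.intro (hK.image continuous_snd)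
  intro x hx
  by_contra hne
  exact hx ⟨(t, x), subset_tsupport _ hne, rfl⟩

lemma hcs_mul {f g : ℝ × ℝ → ℝ} (hg : HasCompactSupport g) :
    HasCompactSupport fun p => f p * g p := by
  have hK : IsCompact (tsupport g) := hg
  apply HasCompactSupport.intro hK
  intro p hp
  have : g p = 0 := image_eq_zero_of_notMem_tsupport hp
  simp [this]

lemma intSliceX {f : ℝ × ℝ → ℝ} (hf : Continuous f) (hs : HasCompactSupport f) (t : ℝ) :
    Integrable fun x : ℝ => f (t, x) :=
  (hf.comp (continuous_const.prodMk continuous_id)).integrable_of_hasCompactSupport (hcsX hs t)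

lemma swap_Ioo {T : ℝ} {f : ℝ × ℝ → ℝ} (hf : Continuous f) (hs : HasCompactSupport f) :
    (∫ t in Set.Ioo (0:ℝ) T, ∫ x : ℝ, f (t, x)) = ∫ x : ℝ, ∫ t in Set.Ioo (0:ℝ) T, f (t, x) := by
  have h1 : Integrable f ((volume : Measure ℝ).prod volume) :=
    hf.integrable_of_hasCompactSupport hs
  have h2 : Integrable (Function.uncurry fun t x => f (t, x))
      (((volume : Measure ℝ).restrict (Set.Ioo 0 T)).prod volume) := by
    rw [Measure.restrict_prod_eq_prod_univ]
    exact h1.restrict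
  exact integral_integral_swap h2

lemma prodIntRestrict {T : ℝ} {f : ℝ × ℝ → ℝ} (hf : Continuous f) (hs : HasCompactSupport f) :
    Integrable (fun t : ℝ => ∫ x : ℝ, f (t, x)) (volume.restrict (Set.Ioo (0:ℝ) T)) := by
  have h2 : Integrable f (((volume : Measure ℝ).restrict (Set.Ioo (0:ℝ) T)).prod volume) := by
    rw [Measure.restrict_prod_eq_prod_univ]
    exact (hf.integrable_of_hasCompactSupport hs :
      Integrable f ((volume : Measure ℝ).prod volume)).restrict
  exact h2.integral_prod_left

lemma le_csup {g : ℝ × ℝ → ℝ} (hg : Continuous g) (hs : HasCompactSupport g) (p : ℝ × ℝ) :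
    |g p| ≤ ⨆ q : ℝ × ℝ, |g q| := by
  apply le_ciSup (f := fun q => |g q|)
  obtain ⟨C, hC⟩ := hg.bounded_above_of_compact_support hs
  exact ⟨C, by rintro y ⟨q, rfl⟩; simpa [Real.norm_eq_abs] using hC q⟩

lemma int_mul_bdd {u v : ℝ → ℝ} (hu : Integrable u) (hv : Continuous v)
    (hb : ∃ C, ∀ x : ℝ, |v x| ≤ C) : Integrable fun x => u x * v x := by
  have := hu.bdd_mul hv.aestronglyMeasurable (c := hb.choose) (Filter.Eventually.of_forall (by simpa [Real.norm_eq_abs] using hb.choose_spec))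
  simpa [mul_comm] using this

end Stmt11Aux

open Stmt11Aux in
/-- Vanishing of the kinetic remainder: for nonnegative classical solutions of the
two-velocity kinetic system with common initial mass `M`, and `ρ_ε = f₊ + f₋`,
`J_ε = c (f₊ - f₋)`, the pairing of `∂_t J_ε + c² ∂_x ρ_ε` against `∂_x ψ` is bounded by
`c M T ‖∂_t ∂_x ψ‖_∞ + c² M T ‖∂_xx ψ‖_∞`; in particular the distributions
`(ε/2) ∂_x(∂_t J_ε + c² ∂_x ρ_ε)` converge to `0` as `ε → 0⁺`. -/
theorem stmt11 (c T M : ℝ) (hc : 0 < c) (hT : 0 < T)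
    (b : ℝ → ℝ → ℝ) (hb : Continuous fun p : ℝ × ℝ => b p.1 p.2)
    (Φ : ℝ → ℝ) (hΦc : Continuous Φ) (hΦb : ∃ C : ℝ, ∀ x, |Φ x| ≤ C)
    (fp fm : ℝ → ℝ → ℝ → ℝ)
    (hreg : ∀ ε > (0:ℝ), ContDiff ℝ 1 (fun p : ℝ × ℝ => fp ε p.1 p.2) ∧
      ContDiff ℝ 1 (fun p : ℝ × ℝ => fm ε p.1 p.2))
    (hpdep : ∀ ε > (0:ℝ), ∀ t x : ℝ,
      deriv (fun s => fp ε s x) t + c * deriv (fun y => fp ε t y) x =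
        (1/ε) * (Φ (-(c * b t x)) * fm ε t x - Φ (c * b t x) * fp ε t x))
    (hpdem : ∀ ε > (0:ℝ), ∀ t x : ℝ,
      deriv (fun s => fm ε s x) t - c * deriv (fun y => fm ε t y) x =
        (1/ε) * (Φ (c * b t x) * fp ε t x - Φ (-(c * b t x)) * fm ε t x))
    (hpos : ∀ ε > (0:ℝ), ∀ t ∈ Set.Icc (0:ℝ) T, ∀ x : ℝ, 0 ≤ fp ε t x ∧ 0 ≤ fm ε t x)
    (hint : ∀ ε > (0:ℝ), ∀ t ∈ Set.Icc (0:ℝ) T,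
      Integrable (fp ε t) ∧ Integrable (fm ε t) ∧
      Integrable (fun x => deriv (fun y => fp ε t y) x) ∧
      Integrable (fun x => deriv (fun y => fm ε t y) x) ∧
      Integrable (fun x => deriv (fun s => fp ε s x) t) ∧
      Integrable (fun x => deriv (fun s => fm ε s x) t))
    (hdecay : ∀ ε > (0:ℝ), ∀ t ∈ Set.Icc (0:ℝ) T,
      Filter.Tendsto (fp ε t) (Filter.cocompact ℝ) (nhds 0) ∧
      Filter.Tendsto (fm ε t) (Filter.cocompact ℝ) (nhds 0))
    (hmass : ∀ ε > (0:ℝ), ∀ t ∈ Set.Icc (0:ℝ) T,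
      (∫ x : ℝ, (fp ε t x + fm ε t x)) = M) :
    ∀ ψ : ℝ → ℝ → ℝ, IsTestOn T ψ →
      (∀ ε > (0:ℝ),
        |∫ t in Set.Ioo (0:ℝ) T, ∫ x : ℝ,
            (deriv (fun s => c * (fp ε s x - fm ε s x)) t +
              c ^ 2 * deriv (fun y => fp ε t y + fm ε t y) x) * deriv (ψ t) x| ≤
          c * M * T * (⨆ p : ℝ × ℝ, |deriv (fun s => deriv (ψ s) p.2) p.1|) +
            c ^ 2 * M * T * (⨆ p : ℝ × ℝ, |deriv (deriv (ψ p.1)) p.2|)) ∧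
      Filter.Tendsto (fun ε : ℝ => (ε / 2) *
          ∫ t in Set.Ioo (0:ℝ) T, ∫ x : ℝ,
            (deriv (fun s => c * (fp ε s x - fm ε s x)) t +
              c ^ 2 * deriv (fun y => fp ε t y + fm ε t y) x) * deriv (ψ t) x)
        (nhdsWithin 0 (Set.Ioi 0)) (nhds 0) := by
  intro ψ hψ
  obtain ⟨hΨ, hΨs, hψ0⟩ := hψ
  set Ψ : ℝ × ℝ → ℝ := fun p : ℝ × ℝ => ψ p.1 p.2 with hΨdef
  have hΨd : Differentiable ℝ Ψ := hΨ.differentiable (by simp)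
  have hD1c : ContDiff ℝ (⊤ : ℕ∞) (pd2 Ψ) := pd2_contDiff hΨ
  have hD1d : Differentiable ℝ (pd2 Ψ) := hD1c.differentiable (by simp)
  have hD1cont : Continuous (pd2 Ψ) := hD1c.continuous
  have hD1s : HasCompactSupport (pd2 Ψ) := pd2_hcs hΨs
  have hD1tc : Continuous (pd1 (pd2 Ψ)) := pd1_cont (hD1c.of_le (by simp))
  have hD1ts : HasCompactSupport (pd1 (pd2 Ψ)) := pd1_hcs hD1s
  have hD11c : Continuous (pd2 (pd2 Ψ)) := pd2_cont (hD1c.of_le (by simp))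
  have hD11s : HasCompactSupport (pd2 (pd2 Ψ)) := pd2_hcs hD1s
  have hD1 : ∀ t x : ℝ, deriv (ψ t) x = pd2 Ψ (t, x) := fun t x => (sliceX hΨd t x).deriv
  have hψconst : ∀ t : ℝ, t ∉ Set.Ioo (0:ℝ) T → ψ t = fun _ => (0:ℝ) := by
    intro t ht; funext x; by_contra h; exact ht (hψ0 t x h)
  have hD1bd : ∀ t : ℝ, t ∉ Set.Ioo (0:ℝ) T → ∀ x : ℝ, pd2 Ψ (t, x) = 0 := by
    intro t ht x
    rw [← hD1 t x, hψconst t ht]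
    simp
  have hmix : ∀ t x : ℝ, deriv (fun s => deriv (ψ s) x) t = pd1 (pd2 Ψ) (t, x) := by
    intro t x
    have h : (fun s => deriv (ψ s) x) = fun s => pd2 Ψ (s, x) := funext fun s => hD1 s x
    rw [h]
    exact (sliceT hD1d t x).deriv
  have hxx : ∀ t x : ℝ, deriv (deriv (ψ t)) x = pd2 (pd2 Ψ) (t, x) := by
    intro t x
    have h : deriv (ψ t) = fun y => pd2 Ψ (t, y) := funext fun y => hD1 t y
    rw [h]
    exact (sliceX hD1d t x).deriv
  have hsup1 : (⨆ p : ℝ × ℝ, |deriv (fun s => deriv (ψ s) p.2) p.1|)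
      = ⨆ p : ℝ × ℝ, |pd1 (pd2 Ψ) p| :=
    iSup_congr fun p => by rw [hmix p.1 p.2]
  have hsup2 : (⨆ p : ℝ × ℝ, |deriv (deriv (ψ p.1)) p.2|)
      = ⨆ p : ℝ × ℝ, |pd2 (pd2 Ψ) p| :=
    iSup_congr fun p => by rw [hxx p.1 p.2]
  set S1 : ℝ := ⨆ p : ℝ × ℝ, |pd1 (pd2 Ψ) p| with hS1def
  set S2 : ℝ := ⨆ p : ℝ × ℝ, |pd2 (pd2 Ψ) p| with hS2def
  have hS1b : ∀ p : ℝ × ℝ, |pd1 (pd2 Ψ) p| ≤ S1 := le_csup hD1tc hD1ts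
  have hS2b : ∀ p : ℝ × ℝ, |pd2 (pd2 Ψ) p| ≤ S2 := le_csup hD11c hD11s
  have hvol : (volume (Set.Ioo (0:ℝ) T)).toReal = T := by
    rw [Real.volume_Ioo, ENNReal.toReal_ofReal (by linarith)]
    ring
  have hvollt : volume (Set.Ioo (0:ℝ) T) < ⊤ := by
    rw [Real.volume_Ioo]; exact ENNReal.ofReal_lt_top
  have key : ∀ ε > (0:ℝ),
      |∫ t in Set.Ioo (0:ℝ) T, ∫ x : ℝ,
          (deriv (fun s => c * (fp ε s x - fm ε s x)) t +
            c ^ 2 * deriv (fun y => fp ε t y + fm ε t y) x) * deriv (ψ t) x| ≤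
        c * M * T * S1 + c ^ 2 * M * T * S2 := by
    intro ε hε
    obtain ⟨hFpC, hFmC⟩ := hreg ε hε
    set Fp : ℝ × ℝ → ℝ := fun p : ℝ × ℝ => fp ε p.1 p.2 with hFpdef
    set Fm : ℝ × ℝ → ℝ := fun p : ℝ × ℝ => fm ε p.1 p.2 with hFmdef
    have hFpd : Differentiable ℝ Fp := hFpC.differentiable one_ne_zero
    have hFmd : Differentiable ℝ Fm := hFmC.differentiable one_ne_zero
    have hFpc : Continuous Fp := hFpC.continuous
    have hFmc : Continuous Fm := hFmC.continuous
    set A : ℝ × ℝ → ℝ := fun p => c * (pd1 Fp p - pd1 Fm p) * pd2 Ψ p with hAdef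
    set B : ℝ × ℝ → ℝ := fun p => c ^ 2 * (pd2 Fp p + pd2 Fm p) * pd2 Ψ p with hBdef
    set W1 : ℝ × ℝ → ℝ := fun p => c * (Fp p - Fm p) * pd1 (pd2 Ψ) p with hW1def
    set W2 : ℝ × ℝ → ℝ := fun p => c ^ 2 * (Fp p + Fm p) * pd2 (pd2 Ψ) p with hW2def
    have hAc : Continuous A :=
      (continuous_const.mul ((pd1_cont hFpC).sub (pd1_cont hFmC))).mul hD1cont
    have hBc : Continuous B :=
      (continuous_const.mul ((pd2_cont hFpC).add (pd2_cont hFmC))).mul hD1cont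
    have hW1c : Continuous W1 := (continuous_const.mul (hFpc.sub hFmc)).mul hD1tc
    have hW2c : Continuous W2 := (continuous_const.mul (hFpc.add hFmc)).mul hD11c
    have hAs : HasCompactSupport A := hcs_mul hD1s
    have hBs : HasCompactSupport B := hcs_mul hD1s
    have hW1s : HasCompactSupport W1 := hcs_mul hD1ts
    have hW2s : HasCompactSupport W2 := hcs_mul hD11s
    have hpderiv : ∀ t x : ℝ, deriv (fun s => c * (fp ε s x - fm ε s x)) t
        = c * (pd1 Fp (t, x) - pd1 Fm (t, x)) := fun t x =>
      (((sliceT hFpd t x).sub (sliceT hFmd t x)).const_mul c).deriv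
    have hxderiv : ∀ t x : ℝ, deriv (fun y => fp ε t y + fm ε t y) x
        = pd2 Fp (t, x) + pd2 Fm (t, x) := fun t x =>
      ((sliceX hFpd t x).add (sliceX hFmd t x)).deriv
    have hGrw : ∀ t : ℝ, (∫ x : ℝ,
        (deriv (fun s => c * (fp ε s x - fm ε s x)) t +
          c ^ 2 * deriv (fun y => fp ε t y + fm ε t y) x) * deriv (ψ t) x)
        = (∫ x : ℝ, A (t, x)) + ∫ x : ℝ, B (t, x) := by
      intro t
      rw [← integral_add (intSliceX hAc hAs t) (intSliceX hBc hBs t)]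
      apply integral_congr_ae
      apply Filter.Eventually.of_forall
      intro x
      beta_reduce
      rw [hpderiv t x, hxderiv t x, hD1 t x]
      simp only [hAdef, hBdef]
      ring
    simp only [hGrw]
    rw [integral_add (prodIntRestrict hAc hAs) (prodIntRestrict hBc hBs)]
    -- bound for the B part
    have hBone : ∀ t ∈ Set.Ioo (0:ℝ) T, ‖∫ x : ℝ, B (t, x)‖ ≤ c ^ 2 * M * S2 := by
      intro t ht
      have htI : t ∈ Set.Icc (0:ℝ) T := Set.Ioo_subset_Icc_self ht
      obtain ⟨hfpI, hfmI, hfpxI, hfmxI, -, -⟩ := hint ε hε t htI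
      have hD1sl : Continuous fun x : ℝ => pd2 Ψ (t, x) :=
        hD1cont.comp (continuous_const.prodMk continuous_id)
      have hD1slb : ∃ C, ∀ x : ℝ, |pd2 Ψ (t, x)| ≤ C := by
        obtain ⟨C, hC⟩ := hD1cont.bounded_above_of_compact_support hD1s
        exact ⟨C, fun x => by simpa [Real.norm_eq_abs] using hC (t, x)⟩
      have hD11sl : Continuous fun x : ℝ => pd2 (pd2 Ψ) (t, x) :=
        hD11c.comp (continuous_const.prodMk continuous_id)
      have hD11slb : ∃ C, ∀ x : ℝ, |pd2 (pd2 Ψ) (t, x)| ≤ C := by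
        obtain ⟨C, hC⟩ := hD11c.bounded_above_of_compact_support hD11s
        exact ⟨C, fun x => by simpa [Real.norm_eq_abs] using hC (t, x)⟩
      have hu'I : Integrable fun x : ℝ => c ^ 2 * (pd2 Fp (t, x) + pd2 Fm (t, x)) := by
        have e1 : (fun x : ℝ => deriv (fun y => fp ε t y) x) = fun x : ℝ => pd2 Fp (t, x) :=
          funext fun x => (sliceX hFpd t x).deriv
        have e2 : (fun x : ℝ => deriv (fun y => fm ε t y) x) = fun x : ℝ => pd2 Fm (t, x) :=
          funext fun x => (sliceX hFmd t x).deriv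
        exact ((e1 ▸ hfpxI).add (e2 ▸ hfmxI)).const_mul _
      have huI : Integrable fun x : ℝ => c ^ 2 * (Fp (t, x) + Fm (t, x)) :=
        (hfpI.add hfmI).const_mul _
      have ibp : (∫ x : ℝ, c ^ 2 * (Fp (t, x) + Fm (t, x)) * pd2 (pd2 Ψ) (t, x))
          = -∫ x : ℝ, c ^ 2 * (pd2 Fp (t, x) + pd2 Fm (t, x)) * pd2 Ψ (t, x) :=
        integral_mul_deriv_eq_deriv_mul_of_integrable
          (u := fun x => c ^ 2 * (Fp (t, x) + Fm (t, x)))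
          (v := fun x => pd2 Ψ (t, x))
          (u' := fun x => c ^ 2 * (pd2 Fp (t, x) + pd2 Fm (t, x)))
          (v' := fun x => pd2 (pd2 Ψ) (t, x))
          (fun x _ => ((sliceX hFpd t x).add (sliceX hFmd t x)).const_mul (c ^ 2))
          (fun x _ => sliceX hD1d t x)
          (int_mul_bdd huI hD11sl hD11slb)
          (int_mul_bdd hu'I hD1sl hD1slb)
          (int_mul_bdd huI hD1sl hD1slb)
      have hBint : (∫ x : ℝ, B (t, x)) = -∫ x : ℝ, W2 (t, x) := by
        simp only [hBdef, hW2def]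
        linarith [ibp]
      have habs : ∀ x : ℝ, |W2 (t, x)| ≤ c ^ 2 * S2 * (fp ε t x + fm ε t x) := by
        intro x
        obtain ⟨h0p, h0m⟩ := hpos ε hε t htI x
        have e : W2 (t, x) = c ^ 2 * (fp ε t x + fm ε t x) * pd2 (pd2 Ψ) (t, x) := rfl
        rw [e, abs_mul, abs_mul, abs_of_nonneg (sq_nonneg c), abs_of_nonneg (by linarith)]
        calc c ^ 2 * (fp ε t x + fm ε t x) * |pd2 (pd2 Ψ) (t, x)|
            ≤ c ^ 2 * (fp ε t x + fm ε t x) * S2 :=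
              mul_le_mul_of_nonneg_left (hS2b (t, x))
                (mul_nonneg (sq_nonneg c) (by linarith))
          _ = c ^ 2 * S2 * (fp ε t x + fm ε t x) := by ring
      rw [Real.norm_eq_abs, hBint, abs_neg]
      calc |∫ x : ℝ, W2 (t, x)| ≤ ∫ x : ℝ, |W2 (t, x)| := by
            simpa [Real.norm_eq_abs] using
              norm_integral_le_integral_norm (μ := volume) fun x : ℝ => W2 (t, x)
        _ ≤ ∫ x : ℝ, c ^ 2 * S2 * (fp ε t x + fm ε t x) :=
            integral_mono (intSliceX hW2c hW2s t).abs ((hfpI.add hfmI).const_mul _) habs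
        _ = c ^ 2 * S2 * M := by
            rw [integral_const_mul, hmass ε hε t htI]
        _ = c ^ 2 * M * S2 := by ring
    -- bound for the A part
    have hIBPt : ∀ x : ℝ, (∫ t in Set.Ioo (0:ℝ) T, A (t, x))
        = -∫ t in Set.Ioo (0:ℝ) T, W1 (t, x) := by
      intro x
      have hvT : pd2 Ψ (T, x) = 0 := hD1bd T (fun h => lt_irrefl T h.2) x
      have hv0 : pd2 Ψ (0, x) = 0 := hD1bd 0 (fun h => lt_irrefl 0 h.1) x
      have hcurve : Continuous fun s : ℝ => (s, x) := continuous_id.prodMk continuous_const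
      have ibp : (∫ t in (0:ℝ)..T, c * (Fp (t, x) - Fm (t, x)) * pd1 (pd2 Ψ) (t, x))
          = c * (Fp (T, x) - Fm (T, x)) * pd2 Ψ (T, x)
            - c * (Fp (0, x) - Fm (0, x)) * pd2 Ψ (0, x)
            - ∫ t in (0:ℝ)..T, c * (pd1 Fp (t, x) - pd1 Fm (t, x)) * pd2 Ψ (t, x) :=
        intervalIntegral.integral_mul_deriv_eq_deriv_mul
          (u := fun s => c * (Fp (s, x) - Fm (s, x)))
          (u' := fun s => c * (pd1 Fp (s, x) - pd1 Fm (s, x)))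
          (v := fun s => pd2 Ψ (s, x))
          (v' := fun s => pd1 (pd2 Ψ) (s, x))
          (fun s _ => ((sliceT hFpd s x).sub (sliceT hFmd s x)).const_mul c)
          (fun s _ => sliceT hD1d s x)
          ((continuous_const.mul
            (((pd1_cont hFpC).comp hcurve).sub ((pd1_cont hFmC).comp hcurve))).intervalIntegrable 0 T)
          ((hD1tc.comp hcurve).intervalIntegrable 0 T)
      rw [hvT, hv0] at ibp
      simp only [mul_zero, sub_zero, zero_sub] at ibp
      calc (∫ t in Set.Ioo (0:ℝ) T, A (t, x))
          = ∫ t in (0:ℝ)..T, A (t, x) := by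
            rw [intervalIntegral.integral_of_le hT.le, integral_Ioc_eq_integral_Ioo]
        _ = -∫ t in (0:ℝ)..T, W1 (t, x) := by
            simp only [hAdef, hW1def]
            linarith [ibp]
        _ = -∫ t in Set.Ioo (0:ℝ) T, W1 (t, x) := by
            rw [intervalIntegral.integral_of_le hT.le, integral_Ioc_eq_integral_Ioo]
    have hAeq : (∫ t in Set.Ioo (0:ℝ) T, ∫ x : ℝ, A (t, x))
        = -∫ t in Set.Ioo (0:ℝ) T, ∫ x : ℝ, W1 (t, x) := by
      rw [swap_Ioo hAc hAs]
      simp only [hIBPt]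
      rw [integral_neg, ← swap_Ioo hW1c hW1s]
    have hAone : ∀ t ∈ Set.Ioo (0:ℝ) T, ‖∫ x : ℝ, W1 (t, x)‖ ≤ c * M * S1 := by
      intro t ht
      have htI : t ∈ Set.Icc (0:ℝ) T := Set.Ioo_subset_Icc_self ht
      obtain ⟨hfpI, hfmI, -, -, -, -⟩ := hint ε hε t htI
      have habs : ∀ x : ℝ, |W1 (t, x)| ≤ c * S1 * (fp ε t x + fm ε t x) := by
        intro x
        obtain ⟨h0p, h0m⟩ := hpos ε hε t htI x
        have e : W1 (t, x) = c * (fp ε t x - fm ε t x) * pd1 (pd2 Ψ) (t, x) := rfl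
        rw [e, abs_mul, abs_mul, abs_of_pos hc]
        have h2 : |fp ε t x - fm ε t x| ≤ fp ε t x + fm ε t x := by
          calc |fp ε t x - fm ε t x| ≤ |fp ε t x| + |fm ε t x| := abs_sub _ _
            _ = fp ε t x + fm ε t x := by rw [abs_of_nonneg h0p, abs_of_nonneg h0m]
        calc c * |fp ε t x - fm ε t x| * |pd1 (pd2 Ψ) (t, x)|
            ≤ c * (fp ε t x + fm ε t x) * S1 :=
              mul_le_mul (mul_le_mul_of_nonneg_left h2 hc.le) (hS1b (t, x)) (abs_nonneg _)
                (mul_nonneg hc.le (by linarith))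
          _ = c * S1 * (fp ε t x + fm ε t x) := by ring
      rw [Real.norm_eq_abs]
      calc |∫ x : ℝ, W1 (t, x)| ≤ ∫ x : ℝ, |W1 (t, x)| := by
            simpa [Real.norm_eq_abs] using
              norm_integral_le_integral_norm (μ := volume) fun x : ℝ => W1 (t, x)
        _ ≤ ∫ x : ℝ, c * S1 * (fp ε t x + fm ε t x) :=
            integral_mono (intSliceX hW1c hW1s t).abs ((hfpI.add hfmI).const_mul _) habs
        _ = c * S1 * M := by rw [integral_const_mul, hmass ε hε t htI]
        _ = c * M * S1 := by ring
    have hAbound : |∫ t in Set.Ioo (0:ℝ) T, ∫ x : ℝ, A (t, x)| ≤ c * M * T * S1 := by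
      rw [hAeq, abs_neg]
      have hb := norm_setIntegral_le_of_norm_le_const (μ := volume) (s := Set.Ioo (0:ℝ) T)
        (C := c * M * S1) hvollt hAone
      rw [measureReal_def, hvol, Real.norm_eq_abs] at hb
      calc |∫ t in Set.Ioo (0:ℝ) T, ∫ x : ℝ, W1 (t, x)| ≤ c * M * S1 * T := hb
        _ = c * M * T * S1 := by ring
    have hBbound : |∫ t in Set.Ioo (0:ℝ) T, ∫ x : ℝ, B (t, x)| ≤ c ^ 2 * M * T * S2 := by
      have hb := norm_setIntegral_le_of_norm_le_const (μ := volume) (s := Set.Ioo (0:ℝ) T)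
        (C := c ^ 2 * M * S2) hvollt hBone
      rw [measureReal_def, hvol, Real.norm_eq_abs] at hb
      calc |∫ t in Set.Ioo (0:ℝ) T, ∫ x : ℝ, B (t, x)| ≤ c ^ 2 * M * S2 * T := hb
        _ = c ^ 2 * M * T * S2 := by ring
    exact le_trans (abs_add_le _ _) (add_le_add hAbound hBbound)
  refine ⟨fun ε hε => ?_, ?_⟩
  · rw [hsup1, hsup2]
    exact key ε hε
  · apply squeeze_zero_norm'
      (a := fun ε : ℝ => ε / 2 * (c * M * T * S1 + c ^ 2 * M * T * S2))
    · filter_upwards [self_mem_nhdsWithin] with ε hε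
      have hε' : (0:ℝ) < ε := Set.mem_Ioi.mp hε
      have h2 : (0:ℝ) ≤ ε / 2 := by linarith
      have h1 := key ε hε'
      calc ‖ε / 2 * ∫ t in Set.Ioo (0:ℝ) T, ∫ x : ℝ,
            (deriv (fun s => c * (fp ε s x - fm ε s x)) t +
              c ^ 2 * deriv (fun y => fp ε t y + fm ε t y) x) * deriv (ψ t) x‖
          = ε / 2 * |∫ t in Set.Ioo (0:ℝ) T, ∫ x : ℝ,
            (deriv (fun s => c * (fp ε s x - fm ε s x)) t +
              c ^ 2 * deriv (fun y => fp ε t y + fm ε t y) x) * deriv (ψ t) x| := by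
            rw [Real.norm_eq_abs, abs_mul, abs_of_nonneg h2]
        _ ≤ ε / 2 * (c * M * T * S1 + c ^ 2 * M * T * S2) :=
            mul_le_mul_of_nonneg_left h1 h2
    · have hcont : Filter.Tendsto (fun ε : ℝ => ε / 2 * (c * M * T * S1 + c ^ 2 * M * T * S2))
          (nhds 0) (nhds ((0:ℝ) / 2 * (c * M * T * S1 + c ^ 2 * M * T * S2))) :=
        ((continuous_id.div_const (2:ℝ)).mul
          (continuous_const : Continuous fun _ : ℝ => c * M * T * S1 + c ^ 2 * M * T * S2)).tendsto 0
      have h0 : (0:ℝ) / 2 * (c * M * T * S1 + c ^ 2 * M * T * S2) = 0 := by ring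
      rw [h0] at hcont
      exact hcont.mono_left nhdsWithin_le_nhds
end

section
/- Vanishing of the flux for a single Dirac mass: let λ > 0, c > 0, m > 0 and x_0 ∈ ℝ. Take the saturated velocity law a(s) = λ c · sgn(s) with antiderivative A(s) = λ c |s|, and set S_1(x) = (m/2) e^{−|x−x_0|} and G_1(x) = −(m/2) sgn(x−x_0) e^{−|x−x_0|}. Then: (i) for every x ≠ x_0, the function x ↦ A(G_1(x)) is differentiable at x with derivative a(G_1(x)) S_1(x), so that the flux J(x) = −(A ∘ G_1)'(x) + a(G_1(x)) S_1(x) vanishes; (ii) the flux vanishes identically as a distribution on ℝ: for every φ ∈ C_c^∞(ℝ), ∫_ℝ A(G_1(x)) φ'(x) dx + ∫_ℝ a(G_1(x)) S_1(x) φ(x) dx = 0. -/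
open MeasureTheory

/-- Vanishing of the flux for a single Dirac mass: with the saturated velocity law
`a(s) = λ c sgn(s)`, antiderivative `A(s) = λ c |s|`, and `S₁ = K * (m δ_{x₀})`,
`G₁ = K' * (m δ_{x₀})`, the flux `J = -(A ∘ G₁)' + a(G₁) S₁` vanishes pointwise outside
`x₀` and vanishes identically as a distribution on `ℝ`. -/
theorem stmt16 (lam c m x₀ : ℝ) (hlam : 0 < lam) (hc : 0 < c) (hm : 0 < m)
    (a A : ℝ → ℝ) (ha : a = fun s => lam * c * Real.sign s)
    (hA : A = fun s => lam * c * |s|)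
    (S₁ G₁ : ℝ → ℝ)
    (hS₁ : S₁ = fun x => (m / 2) * Real.exp (-|x - x₀|))
    (hG₁ : G₁ = fun x => -(m / 2) * Real.sign (x - x₀) * Real.exp (-|x - x₀|)) :
    (∀ x : ℝ, x ≠ x₀ →
      HasDerivAt (fun y => A (G₁ y)) (a (G₁ x) * S₁ x) x) ∧
    (∀ φ : ℝ → ℝ, ContDiff ℝ (⊤ : ℕ∞) φ → HasCompactSupport φ →
      (∫ x : ℝ, A (G₁ x) * deriv φ x) + (∫ x : ℝ, a (G₁ x) * S₁ x * φ x) = 0) := by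
  subst ha hA hS₁ hG₁
  set C : ℝ := lam * c * (m / 2) with hCdef
  have hCpos : 0 < C := by positivity
  -- pointwise computations, left of x₀
  have keyA_lt : ∀ x : ℝ, x < x₀ →
      lam * c * |(-(m / 2) * Real.sign (x - x₀) * Real.exp (-|x - x₀|))| =
        C * Real.exp (x - x₀) := by
    intro x hx
    have h1 : x - x₀ < 0 := by linarith
    rw [Real.sign_of_neg h1, abs_of_neg h1, neg_neg]
    have h2 : -(m / 2) * (-1 : ℝ) * Real.exp (x - x₀) = (m / 2) * Real.exp (x - x₀) := by
      ring
    rw [h2, abs_of_pos (by positivity)]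
    rw [hCdef]; ring
  have keyg_lt : ∀ x : ℝ, x < x₀ →
      lam * c * Real.sign (-(m / 2) * Real.sign (x - x₀) * Real.exp (-|x - x₀|)) *
        ((m / 2) * Real.exp (-|x - x₀|)) = C * Real.exp (x - x₀) := by
    intro x hx
    have h1 : x - x₀ < 0 := by linarith
    rw [Real.sign_of_neg h1, abs_of_neg h1, neg_neg]
    have h2 : -(m / 2) * (-1 : ℝ) * Real.exp (x - x₀) = (m / 2) * Real.exp (x - x₀) := by
      ring
    rw [h2, Real.sign_of_pos (by positivity : (0:ℝ) < (m / 2) * Real.exp (x - x₀))]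
    rw [hCdef]; ring
  -- pointwise computations, right of x₀
  have keyA_gt : ∀ x : ℝ, x₀ < x →
      lam * c * |(-(m / 2) * Real.sign (x - x₀) * Real.exp (-|x - x₀|))| =
        C * Real.exp (x₀ - x) := by
    intro x hx
    have h1 : 0 < x - x₀ := by linarith
    rw [Real.sign_of_pos h1, abs_of_pos h1, neg_sub]
    have h2 : -(m / 2) * (1 : ℝ) * Real.exp (x₀ - x) = -((m / 2) * Real.exp (x₀ - x)) := by
      ring
    rw [h2, abs_neg, abs_of_pos (by positivity)]
    rw [hCdef]; ring
  have keyg_gt : ∀ x : ℝ, x₀ < x →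
      lam * c * Real.sign (-(m / 2) * Real.sign (x - x₀) * Real.exp (-|x - x₀|)) *
        ((m / 2) * Real.exp (-|x - x₀|)) = -(C * Real.exp (x₀ - x)) := by
    intro x hx
    have h1 : 0 < x - x₀ := by linarith
    rw [Real.sign_of_pos h1, abs_of_pos h1, neg_sub]
    have h2 : -(m / 2) * (1 : ℝ) * Real.exp (x₀ - x) = -((m / 2) * Real.exp (x₀ - x)) := by
      ring
    rw [h2, Real.sign_of_neg
      (neg_lt_zero.mpr (by positivity : (0:ℝ) < (m / 2) * Real.exp (x₀ - x)))]
    rw [hCdef]; ring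
  -- the two model functions and their derivatives
  have hdp : ∀ x : ℝ, HasDerivAt (fun y => C * Real.exp (y - x₀)) (C * Real.exp (x - x₀)) x := by
    intro x
    have h := (((hasDerivAt_id x).sub_const x₀).exp).const_mul C
    simpa using h
  have hdq : ∀ x : ℝ,
      HasDerivAt (fun y => C * Real.exp (x₀ - y)) (-(C * Real.exp (x₀ - x))) x := by
    intro x
    have h := (((hasDerivAt_id x).const_sub x₀).exp).const_mul C
    simp only [id_eq] at h
    convert h using 1 <;> first | rfl | ring
  -- part (i)
  have part1 : ∀ x : ℝ, x ≠ x₀ →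
      HasDerivAt
        (fun y => lam * c * |(-(m / 2) * Real.sign (y - x₀) * Real.exp (-|y - x₀|))|)
        (lam * c * Real.sign (-(m / 2) * Real.sign (x - x₀) * Real.exp (-|x - x₀|)) *
          ((m / 2) * Real.exp (-|x - x₀|))) x := by
    intro x hx
    rcases hx.lt_or_gt with h | h
    · rw [keyg_lt x h]
      refine (hdp x).congr_of_eventuallyEq ?_
      filter_upwards [eventually_lt_nhds h] with y hy using keyA_lt y hy
    · rw [keyg_gt x h]
      refine (hdq x).congr_of_eventuallyEq ?_
      filter_upwards [eventually_gt_nhds h] with y hy using keyA_gt y hy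
  constructor
  · intro x hx
    exact part1 x hx
  -- part (ii)
  intro φ hφ hφc
  have hφd : Differentiable ℝ φ := hφ.differentiable (by simp)
  have hφ' : Continuous (deriv φ) := hφ.continuous_deriv (by simp)
  obtain ⟨T, hT⟩ := hφc.isCompact.isBounded.subset_ball 0
  set aa : ℝ := min (-T) (x₀ - 1) with haa
  set bb : ℝ := max T (x₀ + 1) with hbb
  have haax₀ : aa < x₀ := lt_of_le_of_lt (min_le_right _ _) (by linarith)
  have hx₀bb : x₀ < bb := lt_of_lt_of_le (by linarith) (le_max_right _ _)
  have haabb : aa ≤ bb := le_of_lt (lt_trans haax₀ hx₀bb)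
  have hsupp : tsupport φ ⊆ Set.Ioo aa bb := by
    intro x hx
    have hx' := hT hx
    rw [Real.ball_eq_Ioo] at hx'
    constructor
    · calc aa ≤ -T := min_le_left _ _
        _ = 0 - T := by ring
        _ < x := hx'.1
    · calc x < 0 + T := hx'.2
        _ = T := by ring
        _ ≤ bb := le_max_left _ _
  have hφaa : φ aa = 0 := by
    apply image_eq_zero_of_notMem_tsupport
    intro hmem
    exact lt_irrefl aa (hsupp hmem).1
  have hφbb : φ bb = 0 := by
    apply image_eq_zero_of_notMem_tsupport
    intro hmem
    exact lt_irrefl bb (hsupp hmem).2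
  -- reduce the real-line integrals to interval integrals
  have hsub1 : Function.support
      (fun x => lam * c * |(-(m / 2) * Real.sign (x - x₀) * Real.exp (-|x - x₀|))| * deriv φ x)
      ⊆ Set.Ioc aa bb := by
    intro x hx
    have hd : deriv φ x ≠ 0 := by
      intro h0
      apply hx
      simp [h0]
    exact Set.Ioo_subset_Ioc_self (hsupp (support_deriv_subset hd))
  have hsub2 : Function.support
      (fun x => lam * c * Real.sign (-(m / 2) * Real.sign (x - x₀) * Real.exp (-|x - x₀|)) *
        ((m / 2) * Real.exp (-|x - x₀|)) * φ x) ⊆ Set.Ioc aa bb := by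
    intro x hx
    have hd : φ x ≠ 0 := by
      intro h0
      apply hx
      simp [h0]
    exact Set.Ioo_subset_Ioc_self (hsupp (subset_tsupport φ hd))
  rw [← intervalIntegral.integral_eq_integral_of_support_subset hsub1,
    ← intervalIntegral.integral_eq_integral_of_support_subset hsub2]
  -- a.e. facts on subintervals
  have hne : ∀ᵐ x : ℝ, x ≠ x₀ := by
    rw [MeasureTheory.ae_iff]
    simpa using measure_singleton (x₀ : ℝ)
  have haem : ∀ᵐ x ∂(volume.restrict (Set.uIoc aa x₀)), x < x₀ := by
    filter_upwards [ae_restrict_of_ae hne, ae_restrict_mem measurableSet_uIoc] with x h1 h2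
    rw [Set.uIoc_of_le haax₀.le] at h2
    exact lt_of_le_of_ne h2.2 h1
  have haep : ∀ᵐ x ∂(volume.restrict (Set.uIoc x₀ bb)), x₀ < x := by
    filter_upwards [ae_restrict_mem measurableSet_uIoc] with x h2
    rw [Set.uIoc_of_le hx₀bb.le] at h2
    exact h2.1
  -- interval integrability of the four pieces
  have hpc : Continuous fun x : ℝ => C * Real.exp (x - x₀) :=
    continuous_const.mul (Real.continuous_exp.comp (continuous_id.sub continuous_const))
  have hqc : Continuous fun x : ℝ => C * Real.exp (x₀ - x) :=
    continuous_const.mul (Real.continuous_exp.comp (continuous_const.sub continuous_id))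
  have hint1m : IntervalIntegrable
      (fun x => lam * c * |(-(m / 2) * Real.sign (x - x₀) * Real.exp (-|x - x₀|))| * deriv φ x)
      volume aa x₀ := by
    refine ((hpc.mul hφ').intervalIntegrable aa x₀).congr_ae ?_
    filter_upwards [haem] with x hx
    rw [keyA_lt x hx]; rfl
  have hint1p : IntervalIntegrable
      (fun x => lam * c * |(-(m / 2) * Real.sign (x - x₀) * Real.exp (-|x - x₀|))| * deriv φ x)
      volume x₀ bb := by
    refine ((hqc.mul hφ').intervalIntegrable x₀ bb).congr_ae ?_
    filter_upwards [haep] with x hx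
    rw [keyA_gt x hx]; rfl
  have hint2m : IntervalIntegrable
      (fun x => lam * c * Real.sign (-(m / 2) * Real.sign (x - x₀) * Real.exp (-|x - x₀|)) *
        ((m / 2) * Real.exp (-|x - x₀|)) * φ x) volume aa x₀ := by
    refine ((hpc.mul hφ.continuous).intervalIntegrable aa x₀).congr_ae ?_
    filter_upwards [haem] with x hx
    rw [keyg_lt x hx]; rfl
  have hint2p : IntervalIntegrable
      (fun x => lam * c * Real.sign (-(m / 2) * Real.sign (x - x₀) * Real.exp (-|x - x₀|)) *
        ((m / 2) * Real.exp (-|x - x₀|)) * φ x) volume x₀ bb := by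
    refine (((hqc.neg).mul hφ.continuous).intervalIntegrable x₀ bb).congr_ae ?_
    filter_upwards [haep] with x hx
    rw [keyg_gt x hx]; rfl
  -- split at x₀
  rw [← intervalIntegral.integral_add_adjacent_intervals hint1m hint1p,
    ← intervalIntegral.integral_add_adjacent_intervals hint2m hint2p]
  -- rewrite each subinterval integral with the smooth model
  have e1m : (∫ x in aa..x₀,
      lam * c * |(-(m / 2) * Real.sign (x - x₀) * Real.exp (-|x - x₀|))| * deriv φ x) =
      ∫ x in aa..x₀, C * Real.exp (x - x₀) * deriv φ x := by
    apply intervalIntegral.integral_congr_ae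
    filter_upwards [hne] with x hxne hmem
    rw [Set.uIoc_of_le haax₀.le] at hmem
    rw [keyA_lt x (lt_of_le_of_ne hmem.2 hxne)]
  have e1p : (∫ x in x₀..bb,
      lam * c * |(-(m / 2) * Real.sign (x - x₀) * Real.exp (-|x - x₀|))| * deriv φ x) =
      ∫ x in x₀..bb, C * Real.exp (x₀ - x) * deriv φ x := by
    apply intervalIntegral.integral_congr_ae
    filter_upwards [hne] with x _ hmem
    rw [Set.uIoc_of_le hx₀bb.le] at hmem
    rw [keyA_gt x hmem.1]
  have e2m : (∫ x in aa..x₀,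
      lam * c * Real.sign (-(m / 2) * Real.sign (x - x₀) * Real.exp (-|x - x₀|)) *
        ((m / 2) * Real.exp (-|x - x₀|)) * φ x) =
      ∫ x in aa..x₀, C * Real.exp (x - x₀) * φ x := by
    apply intervalIntegral.integral_congr_ae
    filter_upwards [hne] with x hxne hmem
    rw [Set.uIoc_of_le haax₀.le] at hmem
    rw [keyg_lt x (lt_of_le_of_ne hmem.2 hxne)]
  have e2p : (∫ x in x₀..bb,
      lam * c * Real.sign (-(m / 2) * Real.sign (x - x₀) * Real.exp (-|x - x₀|)) *
        ((m / 2) * Real.exp (-|x - x₀|)) * φ x) =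
      ∫ x in x₀..bb, -(C * Real.exp (x₀ - x)) * φ x := by
    apply intervalIntegral.integral_congr_ae
    filter_upwards [hne] with x _ hmem
    rw [Set.uIoc_of_le hx₀bb.le] at hmem
    rw [keyg_gt x hmem.1]
  rw [e1m, e1p, e2m, e2p]
  -- fundamental theorem of calculus on each half
  have sum_m : (∫ x in aa..x₀, C * Real.exp (x - x₀) * deriv φ x) +
      (∫ x in aa..x₀, C * Real.exp (x - x₀) * φ x) = C * φ x₀ := by
    rw [← intervalIntegral.integral_add (f := fun x => C * Real.exp (x - x₀) * deriv φ x)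
      (g := fun x => C * Real.exp (x - x₀) * φ x) ((hpc.mul hφ').intervalIntegrable aa x₀)
      ((hpc.mul hφ.continuous).intervalIntegrable aa x₀)]
    have hderiv : ∀ x ∈ Set.uIcc aa x₀,
        HasDerivAt (fun y => C * Real.exp (y - x₀) * φ y)
          (C * Real.exp (x - x₀) * deriv φ x + C * Real.exp (x - x₀) * φ x) x := by
      intro x _
      have h := (hdp x).mul (hφd x).hasDerivAt
      convert h using 1 <;> first | rfl | ring
    rw [intervalIntegral.integral_eq_sub_of_hasDerivAt hderiv
      (((hpc.mul hφ').add (hpc.mul hφ.continuous)).intervalIntegrable aa x₀)]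
    rw [hφaa]
    simp
  have sum_p : (∫ x in x₀..bb, C * Real.exp (x₀ - x) * deriv φ x) +
      (∫ x in x₀..bb, -(C * Real.exp (x₀ - x)) * φ x) = -(C * φ x₀) := by
    rw [← intervalIntegral.integral_add (f := fun x => C * Real.exp (x₀ - x) * deriv φ x)
      (g := fun x => -(C * Real.exp (x₀ - x)) * φ x) ((hqc.mul hφ').intervalIntegrable x₀ bb)
      (((hqc.neg).mul hφ.continuous).intervalIntegrable x₀ bb)]
    have hderiv : ∀ x ∈ Set.uIcc x₀ bb,
        HasDerivAt (fun y => C * Real.exp (x₀ - y) * φ y)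
          (C * Real.exp (x₀ - x) * deriv φ x + -(C * Real.exp (x₀ - x)) * φ x) x := by
      intro x _
      have h := (hdq x).mul (hφd x).hasDerivAt
      convert h using 1 <;> first | rfl | ring
    have hcint : IntervalIntegrable
        (fun x => C * Real.exp (x₀ - x) * deriv φ x + -(C * Real.exp (x₀ - x)) * φ x)
        volume x₀ bb :=
      ((hqc.mul hφ').add ((hqc.neg).mul hφ.continuous)).intervalIntegrable x₀ bb
    rw [intervalIntegral.integral_eq_sub_of_hasDerivAt hderiv hcint]
    rw [hφbb]
    simp
  linarith [sum_m, sum_p]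
end
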